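/- Let η be a norm on ℝ^N, let A ⊆ ℝ^N, and for ρ ∈ ℝ define (A)^η_ρ := {x : d^η_A(x) ≤ ρ}, where d^η_A is the η-signed distance to A. Then for every r > 0, d^η_{(A)^η_r} ≤ d^η_A − r pointwise on ℝ^N. -/

import Mathlib

/-
The hypotheses make `η` a seminorm `p`, for which the signed distance `d_A` is 1-Lipschitz. With
`S = {d_A ≤ r}`: if `d_A x ≤ r`, every `y ∉ S` has `d_A y > r`, so `p (x - y) ≥ r - d_A x`; if
`d_A x > r`, every `y ∈ A` yields a point of `S` at distance `p (x - y) - r` from `x`.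
-/

open Set

/-- The `η`-distance from a set. -/
noncomputable def etaDist {N : ℕ} (η : EuclideanSpace ℝ (Fin N) → ℝ)
    (A : Set (EuclideanSpace ℝ (Fin N))) (x : EuclideanSpace ℝ (Fin N)) : ℝ :=
  sInf {t | ∃ y ∈ A, t = η (x - y)}

/-- The `η`-signed distance from a set. -/
noncomputable def etaSignedDist {N : ℕ} (η : EuclideanSpace ℝ (Fin N) → ℝ)
    (A : Set (EuclideanSpace ℝ (Fin N))) (x : EuclideanSpace ℝ (Fin N)) : ℝ :=
  etaDist η A x - etaDist η Aᶜ x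

theorem ConvexOn.map_add_le_of_homogeneous {E : Type*} [AddCommGroup E] [Module ℝ E]
    {η : E → ℝ} (hconv : ConvexOn ℝ univ η)
    (hhom : ∀ c : ℝ, 0 ≤ c → ∀ x, η (c • x) = c * η x) (x y : E) :
    η (x + y) ≤ η x + η y := by
  have hmid := hconv.2 (mem_univ x) (mem_univ y) (by norm_num : (0 : ℝ) ≤ 1 / 2)
    (by norm_num : (0 : ℝ) ≤ 1 / 2) (by norm_num)
  have hdouble : (2 : ℝ) • ((1 / 2 : ℝ) • x + (1 / 2 : ℝ) • y) = x + y := by module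
  rw [← hdouble, hhom 2 zero_le_two]
  simp only [smul_eq_mul] at hmid
  linarith

noncomputable def Seminorm.ofConvexOn {E : Type*} [AddCommGroup E] [Module ℝ E] (η : E → ℝ)
    (hconv : ConvexOn ℝ univ η) (heven : ∀ x, η (-x) = η x)
    (hhom : ∀ c : ℝ, 0 ≤ c → ∀ x, η (c • x) = c * η x) : Seminorm ℝ E :=
  Seminorm.of η (hconv.map_add_le_of_homogeneous hhom) fun c x => by
    rcases le_total 0 c with hc | hc
    · rw [hhom c hc, Real.norm_of_nonneg hc]
    · rw [← heven, ← smul_neg, ← neg_smul_neg, neg_neg, hhom (-c) (neg_nonneg.mpr hc),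
        Real.norm_of_nonpos hc]

theorem Real.exists_mem_notMem_Icc_lt_add {P : Set ℝ} (h0 : 0 ∈ P) (h1 : 1 ∉ P)
    {δ : ℝ} (hδ : 0 < δ) :
    ∃ t ∈ P ∩ Icc 0 1, ∃ t' ∈ Pᶜ ∩ Icc 0 1, t' < t + δ := by
  set T := P ∩ Icc (0 : ℝ) 1
  have hT0 : (0 : ℝ) ∈ T := ⟨h0, le_rfl, zero_le_one⟩
  have hTbdd : BddAbove T := ⟨1, fun t ht => ht.2.2⟩
  set s := sSup T
  have hs0 : 0 ≤ s := le_csSup hTbdd hT0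
  obtain ⟨t, htT, hst⟩ := exists_lt_of_lt_csSup ⟨0, hT0⟩ (by linarith : s - δ / 2 < s)
  refine ⟨t, htT, min (s + δ / 2) 1, ⟨?_, by positivity, min_le_right _ _⟩, ?_⟩
  · rcases le_total (s + δ / 2) 1 with hle | hle
    · rw [min_eq_left hle]
      intro hmem
      have := le_csSup hTbdd ⟨hmem, by positivity, hle⟩
      linarith
    · rwa [min_eq_right hle]
  · linarith [min_le_left (s + δ / 2) 1]

section etaDist

variable {N : ℕ} (p : Seminorm ℝ (EuclideanSpace ℝ (Fin N)))
  {B : Set (EuclideanSpace ℝ (Fin N))} {x y : EuclideanSpace ℝ (Fin N)}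

theorem etaDist_nonneg : 0 ≤ etaDist p B x :=
  Real.sInf_nonneg (by rintro t ⟨y, -, rfl⟩; exact apply_nonneg p _)

theorem etaDist_le (hy : y ∈ B) : etaDist p B x ≤ p (x - y) :=
  csInf_le ⟨0, by rintro t ⟨z, -, rfl⟩; exact apply_nonneg p _⟩ ⟨y, hy, rfl⟩

theorem le_etaDist {c : ℝ} (hB : B.Nonempty) (h : ∀ y ∈ B, c ≤ p (x - y)) :
    c ≤ etaDist p B x := by
  obtain ⟨w, hw⟩ := hB
  exact le_csInf ⟨_, w, hw, rfl⟩ (by rintro t ⟨y, hy, rfl⟩; exact h y hy)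

theorem etaDist_eq_zero_of_mem (hx : x ∈ B) : etaDist p B x = 0 :=
  le_antisymm (by simpa using etaDist_le p (x := x) hx) (etaDist_nonneg p)

theorem etaSignedDist_le_etaDist : etaSignedDist p B x ≤ etaDist p B x :=
  sub_le_self _ (etaDist_nonneg p)

theorem etaDist_le_add (hB : B.Nonempty) (x y : EuclideanSpace ℝ (Fin N)) :
    etaDist p B x ≤ etaDist p B y + p (x - y) := by
  rw [← sub_le_iff_le_add]
  refine le_etaDist p hB fun z hz => ?_
  have := map_add_le_add p (x - y) (y - z)
  rw [sub_add_sub_cancel] at this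
  linarith [etaDist_le p (x := x) hz]

/-- Walking from `x ∈ B` to `y ∉ B`, the segment crosses the boundary of `B`; a point of `B` and
a point of `Bᶜ` near the crossing bound the two distances, and their parameters nearly agree. -/
theorem etaDist_add_etaDist_compl_le (hx : x ∈ B) (hy : y ∉ B) :
    etaDist p B y + etaDist p Bᶜ x ≤ p (x - y) := by
  set c := p (x - y)
  refine le_of_forall_pos_le_add fun ε hε => ?_
  have hc : 0 ≤ c := apply_nonneg p _
  obtain ⟨t, ⟨htB, ht0, ht1⟩, t', ⟨ht'B, ht'0, -⟩, htt'⟩ :=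
    Real.exists_mem_notMem_Icc_lt_add (P := {t | x + t • (y - x) ∈ B}) (by simpa using hx)
      (by simpa using hy) (by positivity : 0 < ε / (c + 1))
  have hyB : etaDist p B y ≤ (1 - t) * c := by
    have hyz : y - (x + t • (y - x)) = (1 - t) • (y - x) := by module
    have := etaDist_le p (x := y) htB
    rwa [hyz, map_smul_eq_mul, Real.norm_of_nonneg (by linarith), map_sub_rev] at this
  have hxBc : etaDist p Bᶜ x ≤ t' * c := by
    have hxz : x - (x + t' • (y - x)) = t' • (x - y) := by module
    have := etaDist_le p (x := x) (show x + t' • (y - x) ∈ Bᶜ from ht'B)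
    rwa [hxz, map_smul_eq_mul, Real.norm_of_nonneg ht'0] at this
  have hslack : (t' - t) * c ≤ ε := by
    have : ε / (c + 1) * c ≤ ε := by
      rw [div_mul_eq_mul_div, div_le_iff₀ (by positivity)]
      nlinarith
    nlinarith
  nlinarith

theorem etaSignedDist_le_add (hB : B.Nonempty) (hBc : Bᶜ.Nonempty)
    (x y : EuclideanSpace ℝ (Fin N)) :
    etaSignedDist p B y ≤ etaSignedDist p B x + p (x - y) := by
  unfold etaSignedDist
  by_cases hx : x ∈ B
  · by_cases hy : y ∈ B
    · rw [etaDist_eq_zero_of_mem p hx, etaDist_eq_zero_of_mem p hy]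
      linarith [etaDist_le_add p hBc x y]
    · rw [etaDist_eq_zero_of_mem p hx, etaDist_eq_zero_of_mem p (show y ∈ Bᶜ from hy)]
      linarith [etaDist_add_etaDist_compl_le p hx hy, etaDist_nonneg p (B := B) (x := y),
        etaDist_nonneg p (B := Bᶜ) (x := x)]
  · rw [etaDist_eq_zero_of_mem p (show x ∈ Bᶜ from hx)]
    linarith [etaDist_le_add p hB y x, map_sub_rev p x y, etaDist_nonneg p (B := Bᶜ) (x := y)]

end etaDist

section enlargement

variable {N : ℕ} (p : Seminorm ℝ (EuclideanSpace ℝ (Fin N)))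
  {A : Set (EuclideanSpace ℝ (Fin N))} {r : ℝ} {x : EuclideanSpace ℝ (Fin N)}

/-- The point of the segment `[y, x]` at distance `r` from `y ∈ A` lies in the enlargement and
at distance `p (x - y) - r` from `x`. -/
theorem etaDist_enlargement_add_le {y : EuclideanSpace ℝ (Fin N)} (hy : y ∈ A) (hr : 0 ≤ r)
    (hxy : r ≤ p (x - y)) :
    etaDist p {z | etaSignedDist p A z ≤ r} x + r ≤ p (x - y) := by
  set c := p (x - y)
  have hc : 0 ≤ c := apply_nonneg p _
  have hrc : r / c * c = r := div_mul_cancel_of_imp fun h => by linarith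
  set z := y + (r / c) • (x - y)
  have hzS : etaSignedDist p A z ≤ r := by
    refine (etaSignedDist_le_etaDist p).trans ((etaDist_le p hy).trans_eq ?_)
    rw [add_sub_cancel_left, map_smul_eq_mul, Real.norm_of_nonneg (by positivity), hrc]
  have hxz : x - z = (1 - r / c) • (x - y) := by module
  have := etaDist_le p (x := x) (show z ∈ {z | etaSignedDist p A z ≤ r} from hzS)
  rw [hxz, map_smul_eq_mul, Real.norm_of_nonneg (sub_nonneg.mpr (div_le_one_of_le₀ hxy hc)),
    sub_mul, one_mul, hrc] at this
  linarith

theorem etaSignedDist_enlargement_le_of_mem (hA : A.Nonempty) (hAc : Aᶜ.Nonempty)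
    (hSc : {z | etaSignedDist p A z ≤ r}ᶜ.Nonempty) (hx : etaSignedDist p A x ≤ r) :
    etaSignedDist p {z | etaSignedDist p A z ≤ r} x ≤ etaSignedDist p A x - r := by
  rw [etaSignedDist, etaDist_eq_zero_of_mem p (show x ∈ {z | etaSignedDist p A z ≤ r} from hx)]
  have := le_etaDist p hSc fun y (hy : ¬etaSignedDist p A y ≤ r) =>
    show r - etaSignedDist p A x ≤ p (x - y) by
      linarith [etaSignedDist_le_add p hA hAc x y, not_le.mp hy]
  linarith

theorem etaSignedDist_enlargement_le_of_notMem (hA : A.Nonempty) (hr : 0 ≤ r)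
    (hx : ¬etaSignedDist p A x ≤ r) :
    etaSignedDist p {z | etaSignedDist p A z ≤ r} x ≤ etaSignedDist p A x - r := by
  have hxA : x ∉ A := fun hxA => hx <| by
    linarith [etaSignedDist_le_etaDist p (B := A) (x := x), etaDist_eq_zero_of_mem p hxA]
  have hxr : r < etaDist p A x := by
    linarith [not_le.mp hx, etaSignedDist_le_etaDist p (B := A) (x := x)]
  rw [etaSignedDist, etaSignedDist,
    etaDist_eq_zero_of_mem p (show x ∈ {z | etaSignedDist p A z ≤ r}ᶜ from hx),
    etaDist_eq_zero_of_mem p (show x ∈ Aᶜ from hxA)]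
  have := le_etaDist p hA fun y hy =>
    etaDist_enlargement_add_le p hy hr (hxr.le.trans (etaDist_le p hy))
  linarith

end enlargement

theorem signedDist_enlargement_general {N : ℕ}
    (η : EuclideanSpace ℝ (Fin N) → ℝ)
    (hconv : ConvexOn ℝ Set.univ η)
    (heven : ∀ x, η (-x) = η x)
    (hhom : ∀ (c : ℝ), 0 ≤ c → ∀ x, η (c • x) = c * η x)
    (A : Set (EuclideanSpace ℝ (Fin N)))
    (hAne : A.Nonempty) (hAcne : Aᶜ.Nonempty)
    (r : ℝ) (hr : 0 < r)
    (hScne : {x | etaSignedDist η A x ≤ r}ᶜ.Nonempty) :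
    ∀ x, etaSignedDist η {y | etaSignedDist η A y ≤ r} x ≤ etaSignedDist η A x - r := by
  intro x
  let p := Seminorm.ofConvexOn η hconv heven hhom
  by_cases hx : etaSignedDist p A x ≤ r
  · exact etaSignedDist_enlargement_le_of_mem p hAne hAcne hScne hx
  · exact etaSignedDist_enlargement_le_of_notMem p hAne hr.le hx

/-- For a norm `η` and a closed set `A`, the `r`-enlargement
`(A)^η_r = {x : d^η_A x ≤ r}` satisfies `d^η_{(A)^η_r} ≤ d^η_A - r` pointwise. -/
theorem signedDist_enlargement {N : ℕ}
    (η : EuclideanSpace ℝ (Fin N) → ℝ)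
    (hconv : ConvexOn ℝ Set.univ η)
    (heven : ∀ x, η (-x) = η x)
    (hhom : ∀ (c : ℝ), 0 ≤ c → ∀ x, η (c • x) = c * η x)
    (hpos : ∀ x, x ≠ 0 → 0 < η x)
    (A : Set (EuclideanSpace ℝ (Fin N))) (hA : IsClosed A)
    (hAne : A.Nonempty) (hAcne : Aᶜ.Nonempty)
    (r : ℝ) (hr : 0 < r)
    (hSne : {x | etaSignedDist η A x ≤ r}.Nonempty)
    (hScne : {x | etaSignedDist η A x ≤ r}ᶜ.Nonempty) :
    ∀ x, etaSignedDist η {y | etaSignedDist η A y ≤ r} x ≤ etaSignedDist η A x - r :=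
  signedDist_enlargement_general η hconv heven hhom A hAne hAcne r hr hScne
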